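/- arXiv:2306.15316 — 7 statements merged into one kernel-verified Lean document; each statement's English description precedes it below -/
import Mathlib

section
/- Assume the target has the form ū = j w for some w ∈ K, and let u ∈ K solve the regularized variational inequality over K with target ū and parameter ρ > 0. Then ‖j u − j w‖_H ≤ √ρ · ‖w‖_V. (This is the estimate (2.3) of Lemma 2.1, ‖u_ρ − ū‖_{L²(Ω)} ≤ √ρ ‖∇ū‖_{L²(Ω)} for ū ∈ K_s, in abstract form.) -/
open scoped RealInnerProductSpace

/-- Estimate (2.3) of Lemma 2.1 in abstract form: if the target is
`ū = j w` with `w ∈ K` and `u ∈ K` solves the regularized variational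
inequality over `K` with parameter `ρ > 0`, then
`‖j u − j w‖_H ≤ √ρ ‖w‖_V`. -/
theorem regularized_VI_estimate_sqrt_rho
    {V Hs : Type*} [NormedAddCommGroup V] [InnerProductSpace ℝ V] [CompleteSpace V]
    [NormedAddCommGroup Hs] [InnerProductSpace ℝ Hs] [CompleteSpace Hs]
    (j : V →L[ℝ] Hs) (K : Set V) (hK : Convex ℝ K)
    (w : V) (hw : w ∈ K) (ρ : ℝ) (hρ : 0 < ρ)
    (u : V) (hu : u ∈ K)
    (hVI : ∀ v ∈ K, ρ * ⟪u, v - u⟫ + ⟪j u - j w, j v - j u⟫ ≥ 0) :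
    ‖j u - j w‖ ≤ Real.sqrt ρ * ‖w‖ := by
  have h := hVI w hw
  have h1 : ⟪j u - j w, j w - j u⟫ = -‖j u - j w‖ ^ 2 := by
    rw [show j w - j u = -(j u - j w) by abel, inner_neg_right,
      real_inner_self_eq_norm_sq]
  have h2 : ‖j u - j w‖ ^ 2 ≤ ρ * ⟪u, w - u⟫ := by
    rw [h1] at h; linarith
  have h3 : ⟪u, w - u⟫ ≤ ‖w‖ ^ 2 := by
    have := real_inner_le_norm u w
    have h4 : ⟪u, w - u⟫ = ⟪u, w⟫ - ‖u‖ ^ 2 := by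
      rw [inner_sub_right, real_inner_self_eq_norm_sq]
    nlinarith [norm_nonneg u, norm_nonneg w, sq_nonneg (‖u‖ - ‖w‖)]
  have h5 : ‖j u - j w‖ ^ 2 ≤ (Real.sqrt ρ * ‖w‖) ^ 2 := by
    rw [mul_pow, Real.sq_sqrt hρ.le]
    nlinarith
  have hnn : (0:ℝ) ≤ Real.sqrt ρ * ‖w‖ := by positivity
  nlinarith [norm_nonneg (j u - j w)]
end

section
/- Assume the target has the form ū = j w for some w ∈ K, and let u ∈ K solve the regularized variational inequality over K with target ū and parameter ρ > 0. Then ‖u − w‖_V ≤ ‖w‖_V. (This is the estimate (2.4) of Lemma 2.1, ‖∇(u_ρ − ū)‖_{L²(Ω)} ≤ ‖∇ū‖_{L²(Ω)} for ū ∈ K_s, in abstract form.) -/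
open scoped RealInnerProductSpace

/-- Estimate (2.4) of Lemma 2.1 in abstract form: if the target is
`ū = j w` with `w ∈ K` and `u ∈ K` solves the regularized variational
inequality over `K` with parameter `ρ > 0`, then `‖u − w‖_V ≤ ‖w‖_V`. -/
theorem regularized_VI_estimate_energy
    {V Hs : Type*} [NormedAddCommGroup V] [InnerProductSpace ℝ V] [CompleteSpace V]
    [NormedAddCommGroup Hs] [InnerProductSpace ℝ Hs] [CompleteSpace Hs]
    (j : V →L[ℝ] Hs) (K : Set V) (hK : Convex ℝ K)
    (w : V) (hw : w ∈ K) (ρ : ℝ) (hρ : 0 < ρ)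
    (u : V) (hu : u ∈ K)
    (hVI : ∀ v ∈ K, ρ * ⟪u, v - u⟫ + ⟪j u - j w, j v - j u⟫ ≥ 0) :
    ‖u - w‖ ≤ ‖w‖ := by
  have h := hVI w hw
  have hneg : ⟪j u - j w, j w - j u⟫ = -‖j u - j w‖ ^ 2 := by
    rw [show j w - j u = -(j u - j w) from (neg_sub _ _).symm, inner_neg_right,
      real_inner_self_eq_norm_sq]
  rw [hneg] at h
  have h1 : (0:ℝ) ≤ ⟪u, w - u⟫ := by
    nlinarith [sq_nonneg ‖j u - j w‖]
  -- ‖u-w‖² ≤ -⟪w, u-w⟫ ≤ ‖w‖ ‖u-w‖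
  have h2 : ‖u - w‖ ^ 2 ≤ ‖w‖ * ‖u - w‖ := by
    have hexp : ‖u - w‖ ^ 2 = ⟪u - w, u - w⟫ := (real_inner_self_eq_norm_sq _).symm
    have : ⟪u - w, u - w⟫ = -⟪u, w - u⟫ - ⟪w, u - w⟫ := by
      simp only [inner_sub_left, inner_sub_right, real_inner_comm u w]; ring
    have hcs : -⟪w, u - w⟫ ≤ ‖w‖ * ‖u - w‖ := by
      have := abs_real_inner_le_norm w (u - w)
      have := neg_abs_le (⟪w, u - w⟫)
      linarith
    linarith [hexp, this, hcs, h1]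
  rcases eq_or_lt_of_le (norm_nonneg (u - w)) with h0 | h0
  · rw [← h0]; exact norm_nonneg w
  · nlinarith
end

section
/- Assume the target has the form ū = j w for some w ∈ K, and assume in addition there exists z ∈ H such that ⟨w, φ⟩_V = ⟨z, j φ⟩_H for all φ ∈ V (the abstract form of −Δū = z ∈ L²(Ω)). If u ∈ K solves the regularized variational inequality over K with target ū and parameter ρ > 0, then ‖j u − j w‖_H ≤ ρ · ‖z‖_H. (This is the estimate (2.5) of Lemma 2.1, ‖u_ρ − ū‖_{L²(Ω)} ≤ ρ ‖Δū‖_{L²(Ω)}, in abstract form.) -/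
open scoped RealInnerProductSpace

/-- Estimate (2.5) of Lemma 2.1 in abstract form: if the target is
`ū = j w` with `w ∈ K`, and `z ∈ H` satisfies `⟨w, φ⟩_V = ⟨z, j φ⟩_H` for
all `φ ∈ V` (the abstract form of `−Δū = z ∈ L²(Ω)`), and `u ∈ K` solves
the regularized variational inequality over `K` with parameter `ρ > 0`,
then `‖j u − j w‖_H ≤ ρ ‖z‖_H`. -/
theorem regularized_VI_estimate_rho
    {V Hs : Type*} [NormedAddCommGroup V] [InnerProductSpace ℝ V] [CompleteSpace V]
    [NormedAddCommGroup Hs] [InnerProductSpace ℝ Hs] [CompleteSpace Hs]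
    (j : V →L[ℝ] Hs) (K : Set V) (hK : Convex ℝ K)
    (w : V) (hw : w ∈ K)
    (z : Hs) (hz : ∀ φ : V, ⟪w, φ⟫ = ⟪z, j φ⟫)
    (ρ : ℝ) (hρ : 0 < ρ)
    (u : V) (hu : u ∈ K)
    (hVI : ∀ v ∈ K, ρ * ⟪u, v - u⟫ + ⟪j u - j w, j v - j u⟫ ≥ 0) :
    ‖j u - j w‖ ≤ ρ * ‖z‖ := by
  have h0 := hVI w hw
  -- ⟨ju - jw, jw - ju⟩ = -‖ju - jw‖²
  have e1 : ⟪j u - j w, j w - j u⟫ = -‖j u - j w‖ ^ 2 := by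
    rw [← neg_sub (j u) (j w), inner_neg_right, real_inner_self_eq_norm_sq]
  -- ⟨u, w - u⟩ = -‖u - w‖² + ⟨w, w - u⟩
  have e2 : ⟪u, w - u⟫ = -‖u - w‖ ^ 2 + ⟪w, w - u⟫ := by
    have : ⟪u - w, w - u⟫ = -‖u - w‖ ^ 2 := by
      have hh : w - u = -(u - w) := by abel
      rw [hh, inner_neg_right, real_inner_self_eq_norm_sq]
    have h := inner_sub_left (𝕜 := ℝ) u w (w - u)
    linarith [h, this]
  have e3 : ⟪w, w - u⟫ = ⟪z, j w - j u⟫ := by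
    rw [hz (w - u), map_sub]
  have cs : ⟪z, j w - j u⟫ ≤ ‖z‖ * ‖j u - j w‖ := by
    calc ⟪z, j w - j u⟫ ≤ ‖z‖ * ‖j w - j u‖ := real_inner_le_norm z _
      _ = ‖z‖ * ‖j u - j w‖ := by rw [norm_sub_rev]
  have key : ‖j u - j w‖ ^ 2 ≤ ρ * (‖z‖ * ‖j u - j w‖) := by
    nlinarith [sq_nonneg (‖u - w‖), h0, e1, e2, e3, cs]
  rcases eq_or_lt_of_le (norm_nonneg (j u - j w)) with h | h
  · rw [← h]; positivity
  · nlinarith [key]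
end

section
/- Assume the target has the form ū = j w for some w ∈ K, and assume in addition there exists z ∈ H such that ⟨w, φ⟩_V = ⟨z, j φ⟩_H for all φ ∈ V (the abstract form of −Δū = z ∈ L²(Ω)). If u ∈ K solves the regularized variational inequality over K with target ū and parameter ρ > 0, then ‖u − w‖_V ≤ √ρ · ‖z‖_H. (This is the estimate (2.6) of Lemma 2.1, ‖∇(u_ρ − ū)‖_{L²(Ω)} ≤ √ρ ‖Δū‖_{L²(Ω)}, in abstract form.) -/
open scoped RealInnerProductSpace

/-- Estimate (2.6) of Lemma 2.1 in abstract form: if the target is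
`ū = j w` with `w ∈ K`, and `z ∈ H` satisfies `⟨w, φ⟩_V = ⟨z, j φ⟩_H` for
all `φ ∈ V` (the abstract form of `−Δū = z ∈ L²(Ω)`), and `u ∈ K` solves
the regularized variational inequality over `K` with parameter `ρ > 0`,
then `‖u − w‖_V ≤ √ρ ‖z‖_H`. -/
theorem regularized_VI_estimate_energy_rho
    {V Hs : Type*} [NormedAddCommGroup V] [InnerProductSpace ℝ V] [CompleteSpace V]
    [NormedAddCommGroup Hs] [InnerProductSpace ℝ Hs] [CompleteSpace Hs]
    (j : V →L[ℝ] Hs) (K : Set V) (hK : Convex ℝ K)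
    (w : V) (hw : w ∈ K)
    (z : Hs) (hz : ∀ φ : V, ⟪w, φ⟫ = ⟪z, j φ⟫)
    (ρ : ℝ) (hρ : 0 < ρ)
    (u : V) (hu : u ∈ K)
    (hVI : ∀ v ∈ K, ρ * ⟪u, v - u⟫ + ⟪j u - j w, j v - j u⟫ ≥ 0) :
    ‖u - w‖ ≤ Real.sqrt ρ * ‖z‖ := by
  have h := hVI w hw
  set t : ℝ := ‖j u - j w‖ with ht
  have h1 : ⟪j u - j w, j w - j u⟫ = -t ^ 2 := by
    rw [← neg_sub (j u) (j w), inner_neg_right,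
      real_inner_self_eq_norm_sq]
  have h2 : ⟪u, w - u⟫ = -‖u - w‖ ^ 2 + ⟪z, j w - j u⟫ := by
    have hsplit : ⟪u, w - u⟫ = ⟪u - w, w - u⟫ + ⟪w, w - u⟫ := by
      rw [← inner_add_left, sub_add_cancel]
    rw [hsplit, hz (w - u), map_sub,
      ← neg_sub u w, inner_neg_right,
      real_inner_self_eq_norm_sq]
  have h3 : ⟪z, j w - j u⟫ ≤ ‖z‖ * t := by
    calc ⟪z, j w - j u⟫ ≤ ‖z‖ * ‖j w - j u‖ := real_inner_le_norm _ _
      _ = ‖z‖ * t := by rw [ht, norm_sub_rev]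
  have key : ‖u - w‖ ^ 2 ≤ ρ * ‖z‖ ^ 2 := by
    rw [h1, h2] at h
    nlinarith [sq_nonneg (t - ρ * ‖z‖ / 2), sq_nonneg t, norm_nonneg z,
      mul_le_mul_of_nonneg_left h3 hρ.le]
  have : ‖u - w‖ ≤ Real.sqrt (ρ * ‖z‖ ^ 2) := by
    rw [← Real.sqrt_sq (norm_nonneg (u - w))]
    exact Real.sqrt_le_sqrt key
  calc ‖u - w‖ ≤ Real.sqrt (ρ * ‖z‖ ^ 2) := this
    _ = Real.sqrt ρ * ‖z‖ := by
        rw [Real.sqrt_mul hρ.le, Real.sqrt_sq (norm_nonneg z)]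
end

section
/- (Falk-type a priori error estimate, Lemma 3.1 in abstract form.) Let u ∈ K solve the regularized variational inequality over K with target ū ∈ H and parameter ρ > 0, and assume there exists z ∈ H such that ⟨u, φ⟩_V = ⟨z, j φ⟩_H for all φ ∈ V (the abstract form of −Δu_ρ = z ∈ L²(Ω)). Let K_h ⊆ V be another nonempty convex set (not necessarily contained in K) and let u_h ∈ K_h solve the regularized variational inequality over K_h with the same ū and ρ. Then for every v_h ∈ K_h: ‖j(u − u_h)‖²_H + ρ‖u − u_h‖²_V ≤ 8 ( ‖j(u − v_h)‖²_H + ρ‖u − v_h‖²_V + ρ²‖z‖²_H + ‖j u − ū‖²_H ). -/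
open scoped RealInnerProductSpace

set_option maxHeartbeats 1000000 in
/-- Falk-type a priori error estimate (Lemma 3.1 in abstract form):
if `u ∈ K` solves the regularized variational inequality over `K` with
target `ū` and parameter `ρ > 0`, `z ∈ H` satisfies
`⟨u, φ⟩_V = ⟨z, j φ⟩_H` for all `φ ∈ V`, and `u_h ∈ K_h` solves the
regularized variational inequality over a nonempty convex set `K_h`
(not necessarily contained in `K`) with the same data, then for every
`v_h ∈ K_h`:
`‖j(u − u_h)‖² + ρ‖u − u_h‖² ≤ 8(‖j(u − v_h)‖² + ρ‖u − v_h‖² + ρ²‖z‖² + ‖j u − ū‖²)`. -/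
theorem falk_a_priori_error_estimate
    {V Hs : Type*} [NormedAddCommGroup V] [InnerProductSpace ℝ V] [CompleteSpace V]
    [NormedAddCommGroup Hs] [InnerProductSpace ℝ Hs] [CompleteSpace Hs]
    (j : V →L[ℝ] Hs) (K : Set V) (hK : Convex ℝ K)
    (ub : Hs) (ρ : ℝ) (hρ : 0 < ρ)
    (u : V) (hu : u ∈ K)
    (hVI : ∀ v ∈ K, ρ * ⟪u, v - u⟫ + ⟪j u - ub, j v - j u⟫ ≥ 0)
    (z : Hs) (hz : ∀ φ : V, ⟪u, φ⟫ = ⟪z, j φ⟫)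
    (Kh : Set V) (hKh : Convex ℝ Kh) (hKhne : Kh.Nonempty)
    (uh : V) (huh : uh ∈ Kh)
    (hVIh : ∀ vh ∈ Kh, ρ * ⟪uh, vh - uh⟫ + ⟪j uh - ub, j vh - j uh⟫ ≥ 0)
    (vh : V) (hvh : vh ∈ Kh) :
    ‖j (u - uh)‖ ^ 2 + ρ * ‖u - uh‖ ^ 2 ≤
      8 * (‖j (u - vh)‖ ^ 2 + ρ * ‖u - vh‖ ^ 2 + ρ ^ 2 * ‖z‖ ^ 2 +
        ‖j u - ub‖ ^ 2) := by
  have hT := hVIh vh hvh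
  have iden :
      ρ * ⟪u, u - uh⟫ + ⟪j u - ub, j (u - uh)⟫ + ρ * ⟪u - uh, u - vh⟫
        - ρ * ⟪u, u - vh⟫ + ⟪j (u - uh), j (u - vh)⟫ - ⟪j u - ub, j (u - vh)⟫ =
      (ρ * ⟪u - uh, u - uh⟫ + ⟪j (u - uh), j (u - uh)⟫)
        + (ρ * ⟪uh, vh - uh⟫ + ⟪j uh - ub, j vh - j uh⟫) := by
    simp only [map_sub, inner_sub_left, inner_sub_right]
    ring_nf
  have h1 : ⟪u, u - uh⟫ = ⟪z, j (u - uh)⟫ := hz _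
  have h2 : ⟪u, u - vh⟫ = ⟪z, j (u - vh)⟫ := hz _
  have key :
      ρ * ⟪u - uh, u - uh⟫ + ⟪j (u - uh), j (u - uh)⟫ ≤
      ρ * ⟪z, j (u - uh)⟫ + ⟪j u - ub, j (u - uh)⟫ + ρ * ⟪u - uh, u - vh⟫
        - ρ * ⟪z, j (u - vh)⟫ + ⟪j (u - uh), j (u - vh)⟫ - ⟪j u - ub, j (u - vh)⟫ := by
    rw [← h1, ← h2]; linarith [iden, hT]
  have e1 : ⟪u - uh, u - uh⟫ = ‖u - uh‖ ^ 2 := real_inner_self_eq_norm_sq _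
  have e2 : ⟪j (u - uh), j (u - uh)⟫ = ‖j (u - uh)‖ ^ 2 := real_inner_self_eq_norm_sq _
  have c1 : ⟪z, j (u - uh)⟫ ≤ ‖z‖ * ‖j (u - uh)‖ := real_inner_le_norm _ _
  have c2 : ⟪j u - ub, j (u - uh)⟫ ≤ ‖j u - ub‖ * ‖j (u - uh)‖ := real_inner_le_norm _ _
  have c3 : ⟪u - uh, u - vh⟫ ≤ ‖u - uh‖ * ‖u - vh‖ := real_inner_le_norm _ _
  have c4 : -⟪z, j (u - vh)⟫ ≤ ‖z‖ * ‖j (u - vh)‖ := by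
    have := abs_real_inner_le_norm z (j (u - vh)); linarith [neg_abs_le (⟪z, j (u - vh)⟫ : ℝ)]
  have c5 : ⟪j (u - uh), j (u - vh)⟫ ≤ ‖j (u - uh)‖ * ‖j (u - vh)‖ := real_inner_le_norm _ _
  have c6 : -⟪j u - ub, j (u - vh)⟫ ≤ ‖j u - ub‖ * ‖j (u - vh)‖ := by
    have := abs_real_inner_le_norm (j u - ub) (j (u - vh))
    linarith [neg_abs_le (⟪j u - ub, j (u - vh)⟫ : ℝ)]
  rw [e1, e2] at key
  set a := ‖j (u - uh)‖ with ha
  set b := ‖u - uh‖ with hb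
  set p := ‖j (u - vh)‖ with hp
  set q := ‖u - vh‖ with hq
  set r := ‖z‖ with hr
  set s := ‖j u - ub‖ with hs
  have y1 : ρ * (r * a) ≤ 2 * (ρ ^ 2 * r ^ 2) + a ^ 2 / 8 := by
    nlinarith [sq_nonneg (4 * (ρ * r) - a)]
  have y2 : s * a ≤ 2 * s ^ 2 + a ^ 2 / 8 := by nlinarith [sq_nonneg (4 * s - a)]
  have y3 : ρ * (b * q) ≤ ρ * (2 * q ^ 2 + b ^ 2 / 8) := by
    have : b * q ≤ 2 * q ^ 2 + b ^ 2 / 8 := by nlinarith [sq_nonneg (4 * q - b)]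
    exact mul_le_mul_of_nonneg_left this hρ.le
  have y4 : ρ * (r * p) ≤ (ρ ^ 2 * r ^ 2 + p ^ 2) / 2 := by
    nlinarith [sq_nonneg (ρ * r - p)]
  have y5 : a * p ≤ 2 * p ^ 2 + a ^ 2 / 8 := by nlinarith [sq_nonneg (4 * p - a)]
  have y6 : s * p ≤ (s ^ 2 + p ^ 2) / 2 := by nlinarith [sq_nonneg (s - p)]
  have hq2 : 0 ≤ ρ * q ^ 2 := mul_nonneg hρ.le (sq_nonneg q)
  have hr2 : 0 ≤ ρ ^ 2 * r ^ 2 := mul_nonneg (sq_nonneg ρ) (sq_nonneg r)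
  have key2 : a ^ 2 + ρ * b ^ 2 ≤
      ρ * (r * a) + s * a + ρ * (b * q) + ρ * (r * p) + a * p + s * p := by
    have m1 := mul_le_mul_of_nonneg_left c1 hρ.le
    have m3 := mul_le_mul_of_nonneg_left c3 hρ.le
    have m4 := mul_le_mul_of_nonneg_left c4 hρ.le
    linarith [key, m1, m3, m4, c2, c5, c6]
  have hb2 : 0 ≤ ρ * b ^ 2 := mul_nonneg hρ.le (sq_nonneg b)
  linarith [key2, y1, y2, y3, y4, y5, y6, hq2, hr2, hb2, sq_nonneg p, sq_nonneg s]
end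

section
/- (Abstract conditional form of Theorems 3.2 and 3.4.) Let u ∈ K solve the regularized variational inequality over K with target ū ∈ H and parameter ρ = h² for some h > 0, and assume there exists z ∈ H such that ⟨u, φ⟩_V = ⟨z, j φ⟩_H for all φ ∈ V. Let K_h ⊆ V be a nonempty convex set and u_h ∈ K_h a solution of the regularized variational inequality over K_h with the same ū and ρ = h². Suppose there are constants M ≥ 0 and C ≥ 0 such that ‖z‖_H ≤ M, ‖j u − ū‖_H ≤ h² M, and there exists v_h ∈ K_h with ‖j(u − v_h)‖_H ≤ C h² M and ‖u − v_h‖_V ≤ C h M. Then ‖j(u − u_h)‖²_H + h² ‖u − u_h‖²_V ≤ 16 (C² + 1) h⁴ M². -/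
open scoped RealInnerProductSpace

/-- Abstract conditional form of Theorems 3.2 and 3.4: with `ρ = h²`,
if `‖z‖ ≤ M`, `‖j u − ū‖ ≤ h² M`, and there is `v_h ∈ K_h` with
`‖j(u − v_h)‖ ≤ C h² M` and `‖u − v_h‖ ≤ C h M`, then
`‖j(u − u_h)‖² + h²‖u − u_h‖² ≤ 16 (C² + 1) h⁴ M²`. -/
theorem regularized_VI_fem_error_estimate
    {V Hs : Type*} [NormedAddCommGroup V] [InnerProductSpace ℝ V] [CompleteSpace V]
    [NormedAddCommGroup Hs] [InnerProductSpace ℝ Hs] [CompleteSpace Hs]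
    (j : V →L[ℝ] Hs) (K : Set V) (hK : Convex ℝ K)
    (ub : Hs) (h : ℝ) (hh : 0 < h)
    (u : V) (hu : u ∈ K)
    (hVI : ∀ v ∈ K, h ^ 2 * ⟪u, v - u⟫ + ⟪j u - ub, j v - j u⟫ ≥ 0)
    (z : Hs) (hz : ∀ φ : V, ⟪u, φ⟫ = ⟪z, j φ⟫)
    (Kh : Set V) (hKh : Convex ℝ Kh) (hKhne : Kh.Nonempty)
    (uh : V) (huh : uh ∈ Kh)
    (hVIh : ∀ vh ∈ Kh, h ^ 2 * ⟪uh, vh - uh⟫ + ⟪j uh - ub, j vh - j uh⟫ ≥ 0)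
    (M C : ℝ) (hM : 0 ≤ M) (hC : 0 ≤ C)
    (hzM : ‖z‖ ≤ M) (hjuM : ‖j u - ub‖ ≤ h ^ 2 * M)
    (happrox : ∃ vh ∈ Kh, ‖j (u - vh)‖ ≤ C * h ^ 2 * M ∧ ‖u - vh‖ ≤ C * h * M) :
    ‖j (u - uh)‖ ^ 2 + h ^ 2 * ‖u - uh‖ ^ 2 ≤
      16 * (C ^ 2 + 1) * h ^ 4 * M ^ 2 := by
  obtain ⟨vh, hvhK, hjv, hvv⟩ := happrox
  set f : Hs := (h ^ 2) • z + (j u - ub) with hf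
  -- the regularity identity
  have key : ∀ φ : V, h ^ 2 * ⟪u, φ⟫ + ⟪j u - ub, j φ⟫ = ⟪f, j φ⟫ := by
    intro φ
    rw [hz φ, hf, inner_add_left, real_inner_smul_left]
  have hfnorm : ‖f‖ ≤ 2 * (h ^ 2 * M) := by
    have h1 : ‖f‖ ≤ ‖(h ^ 2) • z‖ + ‖j u - ub‖ := norm_add_le _ _
    have h2 : ‖(h ^ 2) • z‖ = h ^ 2 * ‖z‖ := by
      rw [norm_smul, Real.norm_eq_abs, abs_of_nonneg (sq_nonneg h)]
    have h3 : h ^ 2 * ‖z‖ ≤ h ^ 2 * M :=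
      mul_le_mul_of_nonneg_left hzM (sq_nonneg h)
    linarith
  -- step using the discrete VI
  have step : h ^ 2 * ⟪u - uh, vh - uh⟫ + ⟪j (u - uh), j (vh - uh)⟫ ≤ ⟪f, j (vh - uh)⟫ := by
    have h1 := key (vh - uh)
    have h2 := hVIh vh hvhK
    have e1 : ⟪j (u - uh), j (vh - uh)⟫
        = ⟪j u - ub, j (vh - uh)⟫ - ⟪j uh - ub, j (vh - uh)⟫ := by
      rw [map_sub, inner_sub_left, inner_sub_left, inner_sub_left]
      ring
    have e2 : ⟪u - uh, vh - uh⟫ = ⟪u, vh - uh⟫ - ⟪uh, vh - uh⟫ := inner_sub_left _ _ _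
    have e3 : j vh - j uh = j (vh - uh) := (map_sub j vh uh).symm
    rw [e3] at h2
    rw [e1, e2]
    linarith
  -- expansion
  have h4 : (u - vh) + (vh - uh) = u - uh := by abel
  have expand : ‖j (u - uh)‖ ^ 2 + h ^ 2 * ‖u - uh‖ ^ 2 =
      (⟪j (u - uh), j (u - vh)⟫ + h ^ 2 * ⟪u - uh, u - vh⟫)
      + (h ^ 2 * ⟪u - uh, vh - uh⟫ + ⟪j (u - uh), j (vh - uh)⟫) := by
    have j4 : j (u - vh) + j (vh - uh) = j (u - uh) := by rw [← map_add, h4]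
    have i1 : ⟪j (u - uh), j (u - vh)⟫ + ⟪j (u - uh), j (vh - uh)⟫
        = ⟪j (u - uh), j (u - uh)⟫ := by rw [← inner_add_right, j4]
    have i2 : ⟪u - uh, u - vh⟫ + ⟪u - uh, vh - uh⟫ = ⟪u - uh, u - uh⟫ := by
      rw [← inner_add_right, h4]
    rw [← real_inner_self_eq_norm_sq, ← real_inner_self_eq_norm_sq, ← i1, ← i2]
    ring
  -- bound the f-term
  have fterm : ⟪f, j (vh - uh)⟫ ≤ ‖f‖ * ‖j (u - vh)‖ + ‖f‖ * ‖j (u - uh)‖ := by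
    have j5 : j (vh - u) + j (u - uh) = j (vh - uh) := by
      rw [← map_add]; congr 1; abel
    have i3 : ⟪f, j (vh - uh)⟫ = ⟪f, j (vh - u)⟫ + ⟪f, j (u - uh)⟫ := by
      rw [← inner_add_right, j5]
    have c1 : ⟪f, j (vh - u)⟫ ≤ ‖f‖ * ‖j (vh - u)‖ := real_inner_le_norm _ _
    have c2 : ⟪f, j (u - uh)⟫ ≤ ‖f‖ * ‖j (u - uh)‖ := real_inner_le_norm _ _
    have nn : ‖j (vh - u)‖ = ‖j (u - vh)‖ := by
      rw [show vh - u = -(u - vh) by abel, map_neg, norm_neg]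
    rw [i3]
    rw [nn] at c1
    linarith
  -- Cauchy–Schwarz bounds on the approximation terms
  have cs1 : ⟪j (u - uh), j (u - vh)⟫ ≤ ‖j (u - uh)‖ * ‖j (u - vh)‖ := real_inner_le_norm _ _
  have cs2 : ⟪u - uh, u - vh⟫ ≤ ‖u - uh‖ * ‖u - vh‖ := real_inner_le_norm _ _
  set a := ‖j (u - uh)‖ with ha
  set b := ‖u - uh‖ with hb
  have ha0 : 0 ≤ a := norm_nonneg _
  have hb0 : 0 ≤ b := norm_nonneg _
  have hjv0 : 0 ≤ ‖j (u - vh)‖ := norm_nonneg _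
  have hvv0 : 0 ≤ ‖u - vh‖ := norm_nonneg _
  have hf0 : 0 ≤ ‖f‖ := norm_nonneg _
  have main : a ^ 2 + h ^ 2 * b ^ 2 ≤
      a * (C * h ^ 2 * M) + h ^ 2 * (b * (C * h * M))
      + 2 * (h ^ 2 * M) * (C * h ^ 2 * M) + 2 * (h ^ 2 * M) * a := by
    have t1 : ⟪j (u - uh), j (u - vh)⟫ ≤ a * (C * h ^ 2 * M) :=
      le_trans cs1 (mul_le_mul_of_nonneg_left hjv ha0)
    have t2 : ⟪u - uh, u - vh⟫ ≤ b * (C * h * M) :=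
      le_trans cs2 (mul_le_mul_of_nonneg_left hvv hb0)
    have t2' : h ^ 2 * ⟪u - uh, u - vh⟫ ≤ h ^ 2 * (b * (C * h * M)) :=
      mul_le_mul_of_nonneg_left t2 (sq_nonneg h)
    have t3 : ‖f‖ * ‖j (u - vh)‖ ≤ 2 * (h ^ 2 * M) * (C * h ^ 2 * M) := by
      apply mul_le_mul hfnorm hjv hjv0
      positivity
    have t4 : ‖f‖ * a ≤ 2 * (h ^ 2 * M) * a :=
      mul_le_mul_of_nonneg_right hfnorm ha0
    linarith [expand, step, fterm, t1, t2', t3, t4]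
  have hD0 : 0 ≤ h ^ 2 * M := by positivity
  nlinarith [main, sq_nonneg (a - (C + 2) * (h ^ 2 * M)), sq_nonneg (h * b - C * (h ^ 2 * M)),
    sq_nonneg ((7 * C - 2) * (h ^ 2 * M)), sq_nonneg (h ^ 2 * M)]
end

section
/- (One step of the semi-smooth Newton method realizes the active set strategy.) Let n ∈ ℕ, c > 0, and let B be a real n×n matrix (in the paper B = M_h + ρ K_h), ū, g₋, g₊ ∈ ℝⁿ with g₋ₖ < g₊ₖ for all k. Given an iterate (u, λ) ∈ ℝⁿ × ℝⁿ, set y₊ₖ := λₖ + c (g₊ₖ − uₖ) and y₋ₖ := λₖ + c (g₋ₖ − uₖ), and define diagonal matrices G'min, G'max by (G'min)ₖₖ = 1 if y₊ₖ < 0 and 0 otherwise, (G'max)ₖₖ = 1 if y₋ₖ > 0 and 0 otherwise. Suppose (u⁺, λ⁺) ∈ ℝⁿ × ℝⁿ satisfies the Newton system: B (u − u⁺) − (λ − λ⁺) = B u − λ − ū, and componentwise c ((G'min)ₖₖ + (G'max)ₖₖ)(uₖ − u⁺ₖ) + (1 − (G'min)ₖₖ − (G'max)ₖₖ)(λₖ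 − λ⁺ₖ) = λₖ − min{0, y₊ₖ} − max{0, y₋ₖ}. Then B u⁺ − λ⁺ = ū, and for every index k: if y₊ₖ ≥ 0 and y₋ₖ ≤ 0 then λ⁺ₖ = 0; if y₋ₖ > 0 then u⁺ₖ = g₋ₖ; and if y₊ₖ < 0 then u⁺ₖ = g₊ₖ. -/
/-- One step of the semi-smooth Newton method realizes the active set
strategy: with `y₊ₖ = λₖ + c(g₊ₖ − uₖ)`, `y₋ₖ = λₖ + c(g₋ₖ − uₖ)` and the
slant derivatives `(G'min)ₖₖ = 1` iff `y₊ₖ < 0`, `(G'max)ₖₖ = 1` iff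
`y₋ₖ > 0`, if `(u⁺, λ⁺)` solves the Newton system
`B(u − u⁺) − (λ − λ⁺) = B u − λ − ū` and, componentwise,
`c(G'min + G'max)ₖₖ(uₖ − u⁺ₖ) + (1 − (G'min + G'max)ₖₖ)(λₖ − λ⁺ₖ)
  = λₖ − min{0, y₊ₖ} − max{0, y₋ₖ}`,
then `B u⁺ − λ⁺ = ū` and, for each `k`: `λ⁺ₖ = 0` if `y₊ₖ ≥ 0` and
`y₋ₖ ≤ 0`; `u⁺ₖ = g₋ₖ` if `y₋ₖ > 0`; and `u⁺ₖ = g₊ₖ` if `y₊ₖ < 0`. -/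
theorem newton_step_is_active_set
    (n : ℕ) (c : ℝ) (hc : 0 < c)
    (B : Matrix (Fin n) (Fin n) ℝ) (ub gm gp : Fin n → ℝ)
    (hg : ∀ k, gm k < gp k)
    (u lam uplus lamplus : Fin n → ℝ)
    (yp ym Gmin Gmax : Fin n → ℝ)
    (hyp : ∀ k, yp k = lam k + c * (gp k - u k))
    (hym : ∀ k, ym k = lam k + c * (gm k - u k))
    (hGmin : ∀ k, Gmin k = if yp k < 0 then 1 else 0)
    (hGmax : ∀ k, Gmax k = if ym k > 0 then 1 else 0)
    (hNewton1 : B.mulVec (u - uplus) - (lam - lamplus) =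
      B.mulVec u - lam - ub)
    (hNewton2 : ∀ k,
      c * (Gmin k + Gmax k) * (u k - uplus k) +
        (1 - (Gmin k + Gmax k)) * (lam k - lamplus k) =
      lam k - min 0 (yp k) - max 0 (ym k)) :
    B.mulVec uplus - lamplus = ub ∧
    ∀ k, (0 ≤ yp k ∧ ym k ≤ 0 → lamplus k = 0) ∧
      (0 < ym k → uplus k = gm k) ∧
      (yp k < 0 → uplus k = gp k) := by
  have hmv : B.mulVec (u - uplus) = B.mulVec u - B.mulVec uplus :=
    B.mulVec_sub u uplus
  constructor
  · funext k
    have h1 := congrFun hNewton1 k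
    rw [hmv] at h1
    simp only [Pi.sub_apply] at h1 ⊢
    linarith
  · intro k
    have hlt : ym k < yp k := by
      have := hg k; rw [hyp k, hym k]; nlinarith
    have h2 := hNewton2 k
    refine ⟨?_, ?_, ?_⟩
    · rintro ⟨h₁, h₂⟩
      have e1 : Gmin k = 0 := by rw [hGmin k]; simp [not_lt.mpr h₁]
      have e2 : Gmax k = 0 := by rw [hGmax k]; simp [h₂, not_lt]
      rw [e1, e2, min_eq_left h₁, max_eq_left h₂] at h2
      linarith
    · intro hpos
      have hyppos : 0 < yp k := hpos.trans hlt
      have e1 : Gmin k = 0 := by rw [hGmin k]; simp [not_lt.mpr hyppos.le]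
      have e2 : Gmax k = 1 := by rw [hGmax k]; simp [hpos]
      rw [e1, e2, min_eq_left hyppos.le, max_eq_right hpos.le] at h2
      have := hym k
      have : c * (u k - uplus k) = c * (u k - gm k) := by linarith
      have := mul_left_cancel₀ hc.ne' this
      linarith
    · intro hneg
      have hymneg : ym k < 0 := hlt.trans hneg
      have e1 : Gmin k = 1 := by rw [hGmin k]; simp [hneg]
      have e2 : Gmax k = 0 := by rw [hGmax k]; simp [not_lt.mpr hymneg.le]
      rw [e1, e2, min_eq_right hneg.le, max_eq_left hymneg.le] at h2
      have := hyp k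
      have : c * (u k - uplus k) = c * (u k - gp k) := by linarith
      have := mul_left_cancel₀ hc.ne' this
      linarith
end
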